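/- Let ℓ be an odd prime and let B : ℤ × ℤ → ℤ be a function satisfying, for all integers D ≥ 1 and d ≥ 0, the recurrence B(D, ℓ²d) = ℓ·B(ℓ²D, d) + (D/ℓ)·B(D,d) + B(D/ℓ², d) − ℓ·B(D, d/ℓ²) − (−d/ℓ)·B(D,d). Then for all integers D ≥ 1, d ≥ 0 and all n ≥ 1 one has B(D, ℓ^{2n} d) = ℓⁿ·B(ℓ^{2n} D, d) + Σ_{t=0}^{n−1} (D/ℓ)^{n−t−1}·( B(D/ℓ², ℓ^{2t} d) − ℓ^{t+1}·B(ℓ^{2t} D, d/ℓ²) ) + Σ_{t=0}^{n−1} (D/ℓ)^{n−t−1}·( (D/ℓ) − (−d/ℓ) )·ℓ^{t}·B(ℓ^{2t} D, d). -/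

import Mathlib

/-!
Write `χ = (D/ℓ)`. The `n`-step formula is the solution of the first-order linear recurrence
`B(D, ℓ^{2(n+1)} d) = χ · B(D, ℓ^{2n} d) + Δₙ(D, d)`, so it suffices to identify the
inhomogeneity `Δₙ`. This is done by induction on `n` for all `D` at once: one application of
the one-step recurrence at `(D, ℓ^{2(n+1)} d)` reduces `Δₙ₊₁(D, d)` to `Δₙ(ℓ² D, d)`, where the
terms `(ℓ²D/ℓ)` and `(-ℓ^{2(n+1)} d/ℓ)` vanish.
-/

open Finset

theorem sum_range_succ_pow_sub_mul {R : Type*} [CommSemiring R] (x : R) (f : ℕ → R) (n : ℕ) :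
    ∑ t ∈ range (n + 1), x ^ (n + 1 - t - 1) * f t
      = x * ∑ t ∈ range n, x ^ (n - t - 1) * f t + f n := by
  rw [sum_range_succ, mul_sum, show n + 1 - n - 1 = 0 by omega, pow_zero, one_mul]
  congr 1
  refine sum_congr rfl fun t ht => ?_
  rw [← mul_assoc, ← pow_succ', show n - t - 1 + 1 = n + 1 - t - 1 by grind]

theorem legendreSym_eq_zero_of_dvd (p : ℕ) [Fact p.Prime] {a : ℤ} (h : (p : ℤ) ∣ a) :
    legendreSym p a = 0 :=
  (legendreSym.eq_zero_iff p a).2 ((ZMod.intCast_zmod_eq_zero_iff_dvd a p).2 h)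

def JenkinsRecurrence (ℓ : ℕ) [Fact ℓ.Prime] (B : ℤ × ℤ → ℤ) : Prop :=
  ∀ D d : ℤ, 1 ≤ D → 0 ≤ d →
    B (D, (ℓ : ℤ) ^ 2 * d) =
      (ℓ : ℤ) * B ((ℓ : ℤ) ^ 2 * D, d) + legendreSym ℓ D * B (D, d)
        + (if (ℓ : ℤ) ^ 2 ∣ D then B (D / (ℓ : ℤ) ^ 2, d) else 0)
        - (ℓ : ℤ) * (if (ℓ : ℤ) ^ 2 ∣ d then B (D, d / (ℓ : ℤ) ^ 2) else 0)
        - legendreSym ℓ (-d) * B (D, d)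

namespace JenkinsRecurrence

variable {ℓ : ℕ} [Fact ℓ.Prime] {B : ℤ × ℤ → ℤ}

theorem iterate_step (hB : JenkinsRecurrence ℓ B) {d : ℤ} (hd : 0 ≤ d) (n : ℕ) :
    ∀ D : ℤ, 1 ≤ D →
      B (D, (ℓ : ℤ) ^ (2 * (n + 1)) * d) =
        legendreSym ℓ D * B (D, (ℓ : ℤ) ^ (2 * n) * d)
          + (ℓ : ℤ) ^ (n + 1) * B ((ℓ : ℤ) ^ (2 * (n + 1)) * D, d)
          + (if (ℓ : ℤ) ^ 2 ∣ D then B (D / (ℓ : ℤ) ^ 2, (ℓ : ℤ) ^ (2 * n) * d) else 0)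
          - (ℓ : ℤ) ^ (n + 1) *
              (if (ℓ : ℤ) ^ 2 ∣ d then B ((ℓ : ℤ) ^ (2 * n) * D, d / (ℓ : ℤ) ^ 2) else 0)
          - legendreSym ℓ (-d) * (ℓ : ℤ) ^ n * B ((ℓ : ℤ) ^ (2 * n) * D, d) := by
  have hℓ : (0 : ℤ) < ℓ := by exact_mod_cast (Fact.out : ℓ.Prime).pos
  have hℓ2 : (ℓ : ℤ) ^ 2 ≠ 0 := by positivity
  have sq_mul_pow (k : ℕ) (x : ℤ) :
      (ℓ : ℤ) ^ 2 * ((ℓ : ℤ) ^ (2 * k) * x) = (ℓ : ℤ) ^ (2 * (k + 1)) * x := by ring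
  have pow_mul_sq (k : ℕ) (x : ℤ) :
      (ℓ : ℤ) ^ (2 * k) * ((ℓ : ℤ) ^ 2 * x) = (ℓ : ℤ) ^ (2 * (k + 1)) * x := by ring
  induction n with
  | zero =>
    intro D hD
    simp only [mul_zero, zero_add, mul_one, pow_zero, pow_one, one_mul]
    linear_combination hB D d hD hd
  | succ n ih =>
    intro D hD
    have hdvd : (ℓ : ℤ) ^ 2 ∣ (ℓ : ℤ) ^ (2 * (n + 1)) * d := ⟨_, (sq_mul_pow n d).symm⟩
    have hquot : (ℓ : ℤ) ^ (2 * (n + 1)) * d / (ℓ : ℤ) ^ 2 = (ℓ : ℤ) ^ (2 * n) * d := by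
      rw [← sq_mul_pow, Int.mul_ediv_cancel_left _ hℓ2]
    have hψ : legendreSym ℓ (-((ℓ : ℤ) ^ (2 * (n + 1)) * d)) = 0 :=
      legendreSym_eq_zero_of_dvd ℓ (dvd_neg.2 ((dvd_pow_self _ two_ne_zero).trans hdvd))
    have hχ : legendreSym ℓ ((ℓ : ℤ) ^ 2 * D) = 0 :=
      legendreSym_eq_zero_of_dvd ℓ ((dvd_pow_self _ two_ne_zero).trans (dvd_mul_right _ _))
    have hrec := hB D ((ℓ : ℤ) ^ (2 * (n + 1)) * d) hD (by positivity)
    rw [sq_mul_pow, if_pos hdvd, hquot, hψ] at hrec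
    have hsq := ih (ℓ ^ 2 * D) (by nlinarith [one_le_pow₀ (M₀ := ℤ) (n := 2) hℓ])
    rw [hχ, if_pos (dvd_mul_right _ _), Int.mul_ediv_cancel_left _ hℓ2, pow_mul_sq,
      pow_mul_sq] at hsq
    linear_combination hrec + (ℓ : ℤ) * hsq

end JenkinsRecurrence

theorem stmt_1_general (ℓ : ℕ) [Fact ℓ.Prime]
    (B : ℤ × ℤ → ℤ)
    (hrec : ∀ D d : ℤ, 1 ≤ D → 0 ≤ d →
      B (D, (ℓ : ℤ) ^ 2 * d) =
        (ℓ : ℤ) * B ((ℓ : ℤ) ^ 2 * D, d) + legendreSym ℓ D * B (D, d)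
          + (if (ℓ : ℤ) ^ 2 ∣ D then B (D / (ℓ : ℤ) ^ 2, d) else 0)
          - (ℓ : ℤ) * (if (ℓ : ℤ) ^ 2 ∣ d then B (D, d / (ℓ : ℤ) ^ 2) else 0)
          - legendreSym ℓ (-d) * B (D, d)) :
    ∀ D d : ℤ, 1 ≤ D → 0 ≤ d → ∀ n : ℕ, 1 ≤ n →
      B (D, (ℓ : ℤ) ^ (2 * n) * d) =
        (ℓ : ℤ) ^ n * B ((ℓ : ℤ) ^ (2 * n) * D, d)
          + ∑ t ∈ Finset.range n, (legendreSym ℓ D) ^ (n - t - 1) *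
              ((if (ℓ : ℤ) ^ 2 ∣ D then B (D / (ℓ : ℤ) ^ 2, (ℓ : ℤ) ^ (2 * t) * d) else 0)
                - (ℓ : ℤ) ^ (t + 1) *
                  (if (ℓ : ℤ) ^ 2 ∣ d then B ((ℓ : ℤ) ^ (2 * t) * D, d / (ℓ : ℤ) ^ 2) else 0))
          + ∑ t ∈ Finset.range n, (legendreSym ℓ D) ^ (n - t - 1) *
              ((legendreSym ℓ D - legendreSym ℓ (-d)) * (ℓ : ℤ) ^ t *
                B ((ℓ : ℤ) ^ (2 * t) * D, d)) := by
  rintro D d hD hd n -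
  induction n with
  | zero => simp
  | succ n ih =>
    rw [JenkinsRecurrence.iterate_step hrec hd n D hD, ih, sum_range_succ_pow_sub_mul,
      sum_range_succ_pow_sub_mul]
    ring

/-- Proposition 3.2, Jenkins-type recursion: from the one-step
recurrence for the coefficients `B(D, d)`, the `n`-step formula follows.
Here `legendreSym ℓ m : ℤ` is the Legendre symbol, and `B(m/ℓ², d)` is interpreted
as `0` unless `ℓ² ∣ m` (encoded via `if` expressions). -/
theorem stmt_1 (ℓ : ℕ) [Fact ℓ.Prime] (hℓodd : Odd ℓ)
    (B : ℤ × ℤ → ℤ)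
    (hrec : ∀ D d : ℤ, 1 ≤ D → 0 ≤ d →
      B (D, (ℓ : ℤ) ^ 2 * d) =
        (ℓ : ℤ) * B ((ℓ : ℤ) ^ 2 * D, d) + legendreSym ℓ D * B (D, d)
          + (if (ℓ : ℤ) ^ 2 ∣ D then B (D / (ℓ : ℤ) ^ 2, d) else 0)
          - (ℓ : ℤ) * (if (ℓ : ℤ) ^ 2 ∣ d then B (D, d / (ℓ : ℤ) ^ 2) else 0)
          - legendreSym ℓ (-d) * B (D, d)) :
    ∀ D d : ℤ, 1 ≤ D → 0 ≤ d → ∀ n : ℕ, 1 ≤ n →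
      B (D, (ℓ : ℤ) ^ (2 * n) * d) =
        (ℓ : ℤ) ^ n * B ((ℓ : ℤ) ^ (2 * n) * D, d)
          + ∑ t ∈ Finset.range n, (legendreSym ℓ D) ^ (n - t - 1) *
              ((if (ℓ : ℤ) ^ 2 ∣ D then B (D / (ℓ : ℤ) ^ 2, (ℓ : ℤ) ^ (2 * t) * d) else 0)
                - (ℓ : ℤ) ^ (t + 1) *
                  (if (ℓ : ℤ) ^ 2 ∣ d then B ((ℓ : ℤ) ^ (2 * t) * D, d / (ℓ : ℤ) ^ 2) else 0))
          + ∑ t ∈ Finset.range n, (legendreSym ℓ D) ^ (n - t - 1) *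
              ((legendreSym ℓ D - legendreSym ℓ (-d)) * (ℓ : ℤ) ^ t *
                B ((ℓ : ℤ) ^ (2 * t) * D, d)) :=
  stmt_1_general ℓ B hrec
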